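/- Let G be the graph consisting of three disjoint 4-cliques C_1, C_2, C_3 with distinguished vertices x_i ∈ C_i, together with the additional edges x_1x_2 and x_2x_3. Then s(G) = 3 and CCW(G) = 1. -/

import Mathlib

open SimpleGraph

variable {V : Type*}

/-- An ordered clique cover of `G`, encoded as a labeling `f : V → ℕ` whose
fibers (the cliques `C_i = f⁻¹(i)`) are cliques of `G`. -/
def IsOrderedCliqueCover (G : SimpleGraph V) (f : V → ℕ) : Prop :=
  ∀ n : ℕ, G.IsClique {v | f v = n}

/-- The width `W(C)` of an ordered clique cover: the maximum of `|j - i|` over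
edges `xy` of `G` with `x ∈ C_i`, `y ∈ C_j`. -/
noncomputable def coverWidth (G : SimpleGraph V) (f : V → ℕ) : ℕ :=
  sSup {d : ℕ | ∃ x y, G.Adj x y ∧ d = Nat.dist (f x) (f y)}

/-- The clique cover width `CCW(G)`: minimum width over ordered clique covers. -/
noncomputable def CCW (G : SimpleGraph V) : ℕ :=
  sInf {w : ℕ | ∃ f : V → ℕ, IsOrderedCliqueCover G f ∧ coverWidth G f = w}

/-- `s(G)`: the maximum number of leaves of an induced star in `G`
(an independent set whose members are all adjacent to a common center `r`
outside the set); defined as `1` when `|V(G)| ≤ 2`. -/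
noncomputable def starNum (G : SimpleGraph V) [Fintype V] : ℕ :=
  if Fintype.card V ≤ 2 then 1
  else sSup {k : ℕ | ∃ (r : V) (L : Finset V), r ∉ L ∧ Gᶜ.IsClique (L : Set V) ∧
    (∀ v ∈ L, G.Adj r v) ∧ L.card = k}

/-- the graph of three disjoint 4-cliques (indexed by `Fin 3`,
each with vertex set `Fin 4` and distinguished vertex `x_i = (i, 0)`), with the
extra edges `x_1x_2` and `x_2x_3` between consecutive cliques. -/
def threeCliqueGraph : SimpleGraph (Fin 3 × Fin 4) where
  Adj p q := p ≠ q ∧ (p.1 = q.1 ∨ (p.2 = 0 ∧ q.2 = 0 ∧ Nat.dist p.1 q.1 = 1))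
  symm := by
    constructor
    rintro p q ⟨hne, h⟩
    refine ⟨hne.symm, ?_⟩
    rcases h with h | ⟨h1, h2, h3⟩
    · exact Or.inl h.symm
    · exact Or.inr ⟨h2, h1, by rw [Nat.dist_comm]; exact h3⟩
  loopless := by constructor; rintro p ⟨h, -⟩; exact h rfl

/-
Numbering the cliques `0, 1, 2`, the first coordinate partitions the vertices into cliques, so an
independent set has at most three vertices; `x_2` is the centre of the induced star with leaves
`x_1`, `x_3` and a further vertex of its own clique. Labelling each vertex by its clique gives an
ordered clique cover of width `1`, and width `0` is impossible since a vertex of `C_1 - x_1`,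
`x_1`, `x_2` is an induced path whose ends would have to lie in a common clique.
-/

lemma card_le_of_isClique_fibers {ι : Type*} [Fintype ι] {G : SimpleGraph V} {π : V → ι}
    (hπ : ∀ i, G.IsClique {v | π v = i}) {L : Finset V} (hL : Gᶜ.IsClique (L : Set V)) :
    L.card ≤ Fintype.card ι := by
  refine Finset.card_le_card_of_injOn π (fun _ _ => Finset.mem_univ _) fun u hu v hv huv => ?_
  by_contra hne
  exact (hL hu hv hne).2 (hπ (π v) huv rfl hne)

lemma starNum_eq_of_forall_card_le [Fintype V] {G : SimpleGraph V} {k : ℕ}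
    (hV : 2 < Fintype.card V)
    (hstar : ∃ (r : V) (L : Finset V), r ∉ L ∧ Gᶜ.IsClique (L : Set V) ∧
      (∀ v ∈ L, G.Adj r v) ∧ L.card = k)
    (hbound : ∀ L : Finset V, Gᶜ.IsClique (L : Set V) → L.card ≤ k) :
    starNum G = k := by
  rw [starNum, if_neg hV.not_ge]
  refine IsGreatest.csSup_eq ⟨hstar, ?_⟩
  rintro _ ⟨r, L, -, hL, -, rfl⟩
  exact hbound L hL

section CoverWidth

variable {G : SimpleGraph V} {f : V → ℕ}

lemma le_coverWidth [Finite V] {x y : V} (hxy : G.Adj x y) :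
    Nat.dist (f x) (f y) ≤ coverWidth G f := by
  refine le_csSup ?_ ⟨x, y, hxy, rfl⟩
  refine (Set.finite_range fun p : V × V => Nat.dist (f p.1) (f p.2)).bddAbove.mono ?_
  rintro _ ⟨x, y, -, rfl⟩
  exact ⟨(x, y), rfl⟩

lemma coverWidth_le {w : ℕ} (h : ∀ x y, G.Adj x y → Nat.dist (f x) (f y) ≤ w) :
    coverWidth G f ≤ w :=
  csSup_le' <| by rintro _ ⟨x, y, hxy, rfl⟩; exact h x y hxy

/-- Width `0` would put `u`, `v`, `w` into one clique of the cover. -/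
lemma IsOrderedCliqueCover.coverWidth_pos [Finite V] (hf : IsOrderedCliqueCover G f)
    {u v w : V} (huv : G.Adj u v) (hvw : G.Adj v w) (huw : u ≠ w) (hnuw : ¬ G.Adj u w) :
    0 < coverWidth G f := by
  by_contra! h0
  have hsame : ∀ {x y}, G.Adj x y → f x = f y := fun hxy =>
    Nat.eq_of_dist_eq_zero (Nat.le_zero.mp ((le_coverWidth hxy).trans h0))
  exact hnuw (hf (f w) ((hsame huv).trans (hsame hvw)) rfl huw)

lemma CCW_eq_one_of_coverWidth_le_one [Finite V] (hf : IsOrderedCliqueCover G f)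
    (hw : coverWidth G f ≤ 1)
    {u v w : V} (huv : G.Adj u v) (hvw : G.Adj v w) (huw : u ≠ w) (hnuw : ¬ G.Adj u w) :
    CCW G = 1 := by
  have hmem : coverWidth G f ∈ {w | ∃ g, IsOrderedCliqueCover G g ∧ coverWidth G g = w} :=
    ⟨f, hf, rfl⟩
  refine le_antisymm ((Nat.sInf_le hmem).trans hw) (le_csInf ⟨_, hmem⟩ ?_)
  rintro _ ⟨g, hg, rfl⟩
  exact hg.coverWidth_pos huv hvw huw hnuw

end CoverWidth

namespace threeCliqueGraph

instance : DecidableRel threeCliqueGraph.Adj := fun p q =>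
  decidable_of_iff (p ≠ q ∧ (p.1 = q.1 ∨ (p.2 = 0 ∧ q.2 = 0 ∧ Nat.dist p.1 q.1 = 1))) Iff.rfl

lemma adj_of_fst_eq {u v : Fin 3 × Fin 4} (huv : u ≠ v) (h : u.1 = v.1) :
    threeCliqueGraph.Adj u v :=
  ⟨huv, Or.inl h⟩

lemma isClique_fst_fiber (i : Fin 3) : threeCliqueGraph.IsClique {v | v.1 = i} :=
  fun _ hu _ hv huv => adj_of_fst_eq huv (hu.trans hv.symm)

lemma isOrderedCliqueCover_fst : IsOrderedCliqueCover threeCliqueGraph fun v => (v.1 : ℕ) :=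
  fun _ _ hu _ hv huv => adj_of_fst_eq huv (Fin.ext (hu.trans hv.symm))

lemma coverWidth_fst_le_one : coverWidth threeCliqueGraph (fun v => (v.1 : ℕ)) ≤ 1 := by
  refine coverWidth_le fun x y hxy => ?_
  obtain ⟨-, h | ⟨-, -, h⟩⟩ := hxy
  · simp [h]
  · exact h.le

lemma starNum_eq_three : starNum threeCliqueGraph = 3 := by
  refine starNum_eq_of_forall_card_le (by decide) ?_
    fun L hL => card_le_of_isClique_fibers isClique_fst_fiber hL
  exact ⟨(1, 0), {(0, 0), (2, 0), (1, 1)}, by decide, by decide, by decide, rfl⟩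

lemma CCW_eq_one : CCW threeCliqueGraph = 1 :=
  CCW_eq_one_of_coverWidth_le_one isOrderedCliqueCover_fst coverWidth_fst_le_one
    (u := (0, 1)) (v := (0, 0)) (w := (1, 0)) (by decide) (by decide) (by decide) (by decide)

end threeCliqueGraph

theorem stmt19 : starNum threeCliqueGraph = 3 ∧ CCW threeCliqueGraph = 1 :=
  ⟨threeCliqueGraph.starNum_eq_three, threeCliqueGraph.CCW_eq_one⟩
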